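/- A function f ∈ H²_ω is H²_ω-inner if and only if for every integer k ≥ 1 there exist constants C_k and D_k such that D_k + |λ|² ≤ ‖f·(z^k + λ)‖² ≤ C_k + |λ|² for all λ ∈ ℂ. (In particular these two-sided bounds force ‖f‖ = 1.) -/

import Mathlib

/-!
Expanding the square, `‖z^k f + λ f‖² = ‖z^k f‖² + |λ|² ‖f‖² + 2 Re(λ̄ ⟨z^k f, f⟩)`, and
`z^k f ∈ H²_ω` because `ω (n + k) / ω n → 1`. So the two-sided bounds say exactly that
`|λ|² (‖f‖² - 1) + 2 Re(λ̄ ⟨z^k f, f⟩)` is bounded on `ℂ`, which happens iff `‖f‖ = 1` and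
`⟨z^k f, f⟩ = 0`.
-/

noncomputable section
open Complex Filter

namespace WHS

/-- Membership in the weighted Hardy space: the coefficient sequence `a` satisfies
`∑ ω n * |a n|^2 < ∞`. -/
def memH (ω : ℕ → ℝ) (a : ℕ → ℂ) : Prop :=
  Summable fun n => ω n * ‖a n‖ ^ 2

/-- The squared norm `‖f‖²` in the weighted Hardy space. -/
def wNorm2 (ω : ℕ → ℝ) (a : ℕ → ℂ) : ℝ := ∑' n, ω n * ‖a n‖ ^ 2

/-- The inner product `⟨f, g⟩ = ∑ ω n * a n * conj (b n)` (linear in the first argument). -/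
def wInner (ω : ℕ → ℝ) (a b : ℕ → ℂ) : ℂ :=
  ∑' n, (ω n : ℂ) * a n * (starRingEnd ℂ) (b n)

/-- Coefficients of `z^m * f`. -/
def shift (m : ℕ) (a : ℕ → ℂ) : ℕ → ℂ := fun n => if m ≤ n then a (n - m) else 0

/-- Coefficients of `p * f` for a polynomial `p`. -/
def polyMul (p : Polynomial ℂ) (a : ℕ → ℂ) : ℕ → ℂ :=
  fun n => ∑ j ∈ Finset.range (n + 1), p.coeff j * a (n - j)

/-- Coefficients of the product of power series with coefficients `b` and `a`. -/
def conv (b a : ℕ → ℂ) : ℕ → ℂ :=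
  fun n => ∑ j ∈ Finset.range (n + 1), b j * a (n - j)

/-- `f` is an `H²_ω`-inner function: `f ∈ H²_ω`, `‖f‖ = 1` and `⟨z^m f, f⟩ = 0` for all `m ≥ 1`. -/
def IsInner (ω : ℕ → ℝ) (a : ℕ → ℂ) : Prop :=
  memH ω a ∧ wNorm2 ω a = 1 ∧ ∀ m : ℕ, 1 ≤ m → wInner ω (shift m a) a = 0

end WHS

open scoped ComplexConjugate

namespace WHS

section Expansion

variable {ω : ℕ → ℝ} (hω : ∀ n, 0 ≤ ω n) {a b : ℕ → ℂ}
include hω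

lemma summable_wInner (ha : memH ω a) (hb : memH ω b) :
    Summable fun n => (ω n : ℂ) * a n * conj (b n) := by
  refine Summable.of_norm <| .of_nonneg_of_le (fun n => norm_nonneg _) (fun n => ?_)
    ((ha.add hb).mul_left (1 / 2))
  rw [norm_mul, norm_mul, norm_real, RCLike.norm_conj, Real.norm_eq_abs, abs_of_nonneg (hω n)]
  nlinarith [mul_nonneg (hω n) (sq_nonneg (‖a n‖ - ‖b n‖))]

lemma wNorm2_add_mul (ha : memH ω a) (hb : memH ω b) (lam : ℂ) :
    wNorm2 ω (fun n => a n + lam * b n) =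
      wNorm2 ω a + ‖lam‖ ^ 2 * wNorm2 ω b + 2 * (conj lam * wInner ω a b).re := by
  have hab := (summable_wInner hω ha hb).mul_left (conj lam)
  have hcross : Summable fun n => 2 * (conj lam * ((ω n : ℂ) * a n * conj (b n))).re :=
    ((hab.mapL reCLM).mul_left 2 :)
  have hpt : ∀ n, ω n * ‖a n + lam * b n‖ ^ 2 = ω n * ‖a n‖ ^ 2 + ‖lam‖ ^ 2 * (ω n * ‖b n‖ ^ 2)
      + 2 * (conj lam * ((ω n : ℂ) * a n * conj (b n))).re := fun n => by
    simp only [← normSq_eq_norm_sq, normSq_apply, add_re, add_im, mul_re, mul_im, conj_re,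
      conj_im, ofReal_re, ofReal_im]
    ring
  rw [wNorm2, wNorm2, wNorm2, wInner, tsum_congr hpt, (ha.add (hb.mul_left _)).tsum_add hcross,
    ha.tsum_add (hb.mul_left _), tsum_mul_left, tsum_mul_left, ← re_tsum hab, tsum_mul_left]

end Expansion

lemma tendsto_ratio_add {ω : ℕ → ℝ} (hpos : ∀ n, 0 < ω n)
    (hlim : Tendsto (fun n => ω (n + 1) / ω n) atTop (nhds 1)) (k : ℕ) :
    Tendsto (fun m => ω (m + k) / ω m) atTop (nhds 1) := by
  induction k with
  | zero => simp [div_self (hpos _).ne']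
  | succ k ih =>
    have hstep := (hlim.comp (tendsto_add_atTop_nat k)).mul ih
    rw [mul_one] at hstep
    refine hstep.congr fun m => ?_
    simp only [Function.comp_apply, ← add_assoc]
    rw [div_mul_div_cancel₀ (hpos _).ne']

lemma memH_shift {ω : ℕ → ℝ} (hω : ∀ n, 0 ≤ ω n) {k : ℕ} {M : ℝ}
    (hM : ∀ m, ω (m + k) ≤ M * ω m) {f : ℕ → ℂ} (hf : memH ω f) : memH ω (shift k f) := by
  rw [memH, ← summable_nat_add_iff k]
  simp only [shift, Nat.le_add_left, if_true, Nat.add_sub_cancel]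
  exact .of_nonneg_of_le (fun m => mul_nonneg (hω _) (sq_nonneg _))
    (fun m => by rw [← mul_assoc]; exact mul_le_mul_of_nonneg_right (hM m) (sq_nonneg _))
    (hf.mul_left M)

lemma memH_shift_of_tendsto_ratio {ω : ℕ → ℝ} (hpos : ∀ n, 0 < ω n)
    (hlim : Tendsto (fun n => ω (n + 1) / ω n) atTop (nhds 1)) {f : ℕ → ℂ} (hf : memH ω f)
    (k : ℕ) : memH ω (shift k f) := by
  obtain ⟨M, hM⟩ := (tendsto_ratio_add hpos hlim k).bddAbove_range
  refine memH_shift (fun n => (hpos n).le) (M := M) (fun m => ?_) hf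
  rw [← div_le_iff₀ (hpos m)]
  exact hM ⟨m, rfl⟩

end WHS

lemma eq_zero_of_forall_mul_le {x C : ℝ} (h : ∀ t : ℝ, t * x ≤ C) : x = 0 := by
  by_contra hx
  have := h ((|C| + 1) / x)
  rw [div_mul_cancel₀ _ hx] at this
  linarith [le_abs_self C]

lemma eq_zero_of_forall_nonneg_mul_mem_Icc {x C D : ℝ}
    (h : ∀ s : ℝ, 0 ≤ s → D ≤ s * x ∧ s * x ≤ C) : x = 0 := by
  refine eq_zero_of_forall_mul_le (C := max C (-D)) fun t => ?_
  rcases le_total 0 t with ht | ht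
  · exact le_max_of_le_left (h t ht).2
  · have := (h (-t) (neg_nonneg.2 ht)).1
    exact le_max_of_le_right (by linarith)

lemma eq_zero_of_bounded_normSq_add_re {e C D : ℝ} {c : ℂ}
    (h : ∀ lam : ℂ, D ≤ ‖lam‖ ^ 2 * e + 2 * (conj lam * c).re ∧
      ‖lam‖ ^ 2 * e + 2 * (conj lam * c).re ≤ C) : e = 0 ∧ c = 0 := by
  -- `λ` and `-λ` cancel the linear term; then `λ = t c` makes it `2 t |c|²`.
  have he : e = 0 := by
    refine eq_zero_of_forall_nonneg_mul_mem_Icc (C := C) (D := D) fun s hs => ?_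
    have hlam : ‖((√s : ℝ) : ℂ)‖ ^ 2 = s := by
      rw [norm_real, Real.norm_eq_abs, sq_abs, Real.sq_sqrt hs]
    have hp := h (√s : ℝ)
    have hm := h (-(√s : ℝ))
    simp only [norm_neg, map_neg, neg_mul, neg_re, hlam] at hp hm
    constructor <;> linarith
  refine ⟨he, norm_eq_zero.1 (pow_eq_zero_iff two_ne_zero |>.1 ?_)⟩
  refine eq_zero_of_forall_mul_le (C := C / 2) fun t => ?_
  have ht := (h (t * c)).2
  rw [he, mul_zero, zero_add, map_mul, conj_ofReal, mul_assoc, conj_mul', re_ofReal_mul,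
    ← ofReal_pow, ofReal_re] at ht
  linarith

lemma exists_two_sided_bounds_iff (A N : ℝ) (c : ℂ) :
    (∃ C D : ℝ, ∀ lam : ℂ, D + ‖lam‖ ^ 2 ≤ A + ‖lam‖ ^ 2 * N + 2 * (conj lam * c).re ∧
      A + ‖lam‖ ^ 2 * N + 2 * (conj lam * c).re ≤ C + ‖lam‖ ^ 2) ↔ N = 1 ∧ c = 0 := by
  constructor
  · rintro ⟨C, D, h⟩
    obtain ⟨hN, hc⟩ := eq_zero_of_bounded_normSq_add_re (e := N - 1) (C := C - A) (D := D - A)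
      fun lam => by constructor <;> linarith [h lam]
    exact ⟨by linarith, hc⟩
  · rintro ⟨rfl, rfl⟩
    exact ⟨A, A, fun lam => by simp⟩

open WHS

theorem stmt8_general (ω : ℕ → ℝ) (hpos : ∀ n, 0 < ω n)
    (hlim : Filter.Tendsto (fun n => ω (n + 1) / ω n) Filter.atTop (nhds 1))
    (f : ℕ → ℂ) (hf : WHS.memH ω f) :
    WHS.IsInner ω f ↔
      ∀ k : ℕ, 1 ≤ k → ∃ C D : ℝ, ∀ lam : ℂ,
        D + ‖lam‖ ^ 2 ≤ WHS.wNorm2 ω (fun n => WHS.shift k f n + lam * f n) ∧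
        WHS.wNorm2 ω (fun n => WHS.shift k f n + lam * f n) ≤ C + ‖lam‖ ^ 2 := by
  have hexpand (k : ℕ) (lam : ℂ) := wNorm2_add_mul (fun n => (hpos n).le)
    (memH_shift_of_tendsto_ratio hpos hlim hf k) hf lam
  calc IsInner ω f ↔ wNorm2 ω f = 1 ∧ ∀ k, 1 ≤ k → wInner ω (shift k f) f = 0 := and_iff_right hf
    _ ↔ ∀ k, 1 ≤ k → wNorm2 ω f = 1 ∧ wInner ω (shift k f) f = 0 :=
      ⟨fun ⟨hN, hc⟩ k hk => ⟨hN, hc k hk⟩, fun h => ⟨(h 1 le_rfl).1, fun k hk => (h k hk).2⟩⟩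
    _ ↔ _ := forall₂_congr fun k _ => by
      simp only [hexpand]
      exact (exists_two_sided_bounds_iff _ _ _).symm

/-- `f ∈ H²_ω` is inner iff for every `k ≥ 1` there exist constants
`C_k`, `D_k` with `D_k + |λ|² ≤ ‖f·(z^k + λ)‖² ≤ C_k + |λ|²` for all `λ ∈ ℂ`. -/
theorem stmt8 (ω : ℕ → ℝ) (hpos : ∀ n, 0 < ω n) (hω0 : ω 0 = 1)
    (hlim : Filter.Tendsto (fun n => ω (n + 1) / ω n) Filter.atTop (nhds 1))
    (f : ℕ → ℂ) (hf : WHS.memH ω f) :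
    WHS.IsInner ω f ↔
      ∀ k : ℕ, 1 ≤ k → ∃ C D : ℝ, ∀ lam : ℂ,
        D + ‖lam‖ ^ 2 ≤ WHS.wNorm2 ω (fun n => WHS.shift k f n + lam * f n) ∧
        WHS.wNorm2 ω (fun n => WHS.shift k f n + lam * f n) ≤ C + ‖lam‖ ^ 2 :=
  stmt8_general ω hpos hlim f hf
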